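/- Let A, B be 2×2 complex matrices with |det A| = |det B| = 1, and let w₁, w₂, w₃ be unit vectors in ℂ². Then |w₁ ∧ A w₂| ≤ |w₃ ∧ A w₂| + √2 · ‖A‖ · |w₁ ∧ w₃|, where u ∧ v denotes the determinant of the 2×2 matrix with columns u and v. -/

import Mathlib

/-- The wedge (2×2 determinant) of two vectors in ℂ². -/
noncomputable def wedge (u v : Fin 2 → ℂ) : ℂ := u 0 * v 1 - u 1 * v 0

/-- Operator norm of a 2×2 complex matrix w.r.t. the Euclidean norm on ℂ². -/
noncomputable def opNorm (A : Matrix (Fin 2) (Fin 2) ℂ) : ℝ :=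
  ‖Matrix.toEuclideanCLM (𝕜 := ℂ) A‖

/-!
Put `n := (-v̄₂, v̄₁)`, the vector with `⟪n, x⟫ = v ∧ x`. Then `‖n‖ = ‖v‖` and `v ∧ n = ‖v‖²`, and
the Plücker relation `(u ∧ x)(v ∧ n) = (u ∧ n)(v ∧ x) - (u ∧ v)(n ∧ x)` together with
Hadamard's inequality `|a ∧ b| ≤ ‖a‖ ‖b‖` gives `‖v‖ |u ∧ x| ≤ ‖u‖ |v ∧ x| + |u ∧ v| ‖x‖`.
Take `u = w₁`, `v = w₃`, `x = A w₂` and use `‖A w₂‖ ≤ ‖A‖ ≤ √2 ‖A‖`.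
-/

open ComplexConjugate

noncomputable def wedgeDual (v : EuclideanSpace ℂ (Fin 2)) : EuclideanSpace ℂ (Fin 2) :=
  !₂[-conj (v 1), conj (v 0)]

lemma inner_wedgeDual (v x : EuclideanSpace ℂ (Fin 2)) : inner ℂ (wedgeDual v) x = wedge v x := by
  simp only [wedgeDual, PiLp.inner_apply, RCLike.inner_apply, Fin.sum_univ_two, Matrix.cons_val_zero,
    Matrix.cons_val_one, Matrix.cons_val_fin_one, map_neg, RingHomCompTriple.comp_apply,
    RingHom.id_apply, wedge]
  ring

lemma norm_wedgeDual (v : EuclideanSpace ℂ (Fin 2)) : ‖wedgeDual v‖ = ‖v‖ := by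
  simp [EuclideanSpace.norm_eq, wedgeDual, Fin.sum_univ_two, add_comm]

lemma wedge_wedgeDual_self (v : EuclideanSpace ℂ (Fin 2)) :
    wedge v (wedgeDual v) = (‖v‖ : ℂ) ^ 2 := by
  rw [← inner_wedgeDual, inner_self_eq_norm_sq_to_K, norm_wedgeDual]
  rfl

lemma norm_wedge_le (u v : EuclideanSpace ℂ (Fin 2)) : ‖wedge u v‖ ≤ ‖u‖ * ‖v‖ := by
  rw [← inner_wedgeDual, ← norm_wedgeDual u]
  exact norm_inner_le_norm _ _

lemma wedge_mul_wedge (u v x n : Fin 2 → ℂ) :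
    wedge u x * wedge v n = wedge u n * wedge v x - wedge u v * wedge n x := by
  simp only [wedge]
  ring

lemma norm_mul_norm_wedge_le (u v x : EuclideanSpace ℂ (Fin 2)) :
    ‖v‖ * ‖wedge u x‖ ≤ ‖u‖ * ‖wedge v x‖ + ‖wedge u v‖ * ‖x‖ := by
  rcases (norm_nonneg v).eq_or_lt with hv | hv
  · rw [← hv, zero_mul]
    positivity
  set n := wedgeDual v
  have hplucker : (‖v‖ : ℂ) ^ 2 * wedge u x = wedge u n * wedge v x - wedge u v * wedge n x := by
    rw [← wedge_wedgeDual_self, mul_comm, wedge_mul_wedge]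
  have hbound : ‖v‖ * (‖v‖ * ‖wedge u x‖) ≤ ‖v‖ * (‖u‖ * ‖wedge v x‖ + ‖wedge u v‖ * ‖x‖) :=
    calc ‖v‖ * (‖v‖ * ‖wedge u x‖) = ‖wedge u n * wedge v x - wedge u v * wedge n x‖ := by
          rw [← hplucker, norm_mul, norm_pow, Complex.norm_real, norm_norm]
          ring
      _ ≤ ‖wedge u n‖ * ‖wedge v x‖ + ‖wedge u v‖ * ‖wedge n x‖ := by
          grw [norm_sub_le, norm_mul, norm_mul]
      _ ≤ (‖u‖ * ‖v‖) * ‖wedge v x‖ + ‖wedge u v‖ * (‖v‖ * ‖x‖) := by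
          grw [norm_wedge_le u n, norm_wedge_le n x, norm_wedgeDual]
      _ = ‖v‖ * (‖u‖ * ‖wedge v x‖ + ‖wedge u v‖ * ‖x‖) := by ring
  exact le_of_mul_le_mul_left hbound hv

theorem stmt1_general (A : Matrix (Fin 2) (Fin 2) ℂ)
    (w₁ w₂ w₃ : EuclideanSpace ℂ (Fin 2))
    (h₁ : ‖w₁‖ = 1) (h₂ : ‖w₂‖ = 1) (h₃ : ‖w₃‖ = 1) :
    ‖wedge w₁ (A.mulVec w₂)‖ ≤
      ‖wedge w₃ (A.mulVec w₂)‖ +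
        Real.sqrt 2 * opNorm A * ‖wedge w₁ w₃‖ := by
  set x := Matrix.toEuclideanCLM (𝕜 := ℂ) A w₂
  have hx : A.mulVec w₂ = x := (Matrix.ofLp_toEuclideanCLM A w₂).symm
  have hxA : ‖x‖ ≤ opNorm A := by
    simpa [h₂, x, opNorm] using (Matrix.toEuclideanCLM (𝕜 := ℂ) A).le_opNorm w₂
  have hxA' : ‖x‖ ≤ Real.sqrt 2 * opNorm A :=
    hxA.trans (le_mul_of_one_le_left (norm_nonneg _) (Real.one_le_sqrt.mpr one_le_two))
  have hwedge := norm_mul_norm_wedge_le w₁ w₃ x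
  rw [h₁, h₃, one_mul, one_mul] at hwedge
  rw [hx]
  calc ‖wedge w₁ x‖ ≤ ‖wedge w₃ x‖ + ‖wedge w₁ w₃‖ * ‖x‖ := hwedge
    _ ≤ ‖wedge w₃ x‖ + ‖wedge w₁ w₃‖ * (Real.sqrt 2 * opNorm A) := by grw [hxA']
    _ = ‖wedge w₃ x‖ + Real.sqrt 2 * opNorm A * ‖wedge w₁ w₃‖ := by ring

theorem stmt1 (A B : Matrix (Fin 2) (Fin 2) ℂ)
    (hA : ‖A.det‖ = 1) (hB : ‖B.det‖ = 1)
    (w₁ w₂ w₃ : EuclideanSpace ℂ (Fin 2))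
    (h₁ : ‖w₁‖ = 1) (h₂ : ‖w₂‖ = 1) (h₃ : ‖w₃‖ = 1) :
    ‖wedge w₁ (A.mulVec w₂)‖ ≤
      ‖wedge w₃ (A.mulVec w₂)‖ +
        Real.sqrt 2 * opNorm A * ‖wedge w₁ w₃‖ :=
  stmt1_general A w₁ w₂ w₃ h₁ h₂ h₃
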